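/- Let (Ω, 𝓕, μ) be a standard Borel probability space, X : Ω → 𝒳 measurable, T : Ω → ℝ measurable, and Y₁ : Ω → ℝ integrable. Assume Y₁ is conditionally independent of T given σ(X), and μ{T = 1} > 0. Let μ₁ = μ[· | {T = 1}] denote the conditional probability measure given the event {T = 1}. Then the conditional expectation of Y₁ given σ(X) computed under μ₁ equals the conditional expectation of Y₁ given σ(X) computed under μ, μ₁-almost everywhere: μ₁[Y₁ | σ(X)] = μ[Y₁ | σ(X)] μ₁-a.e. -/

import Mathlib

/-!
Given `σ(X)`, the outcome `Y₁` and the treatment indicator `1_A`, `A = {T = 1}`, are independent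
under almost every measure of the conditional-expectation kernel, so
`μ[Y₁ · 1_A | σ(X)] = μ[Y₁ | σ(X)] · μ[1_A | σ(X)]`. Pulling the `σ(X)`-measurable factor
`μ[Y₁ | σ(X)]` back inside gives `∫_{s ∩ A} μ[Y₁ | σ(X)] dμ = ∫_{s ∩ A} Y₁ dμ` for every
`s ∈ σ(X)`. Integrals against `μ[|A]` are rescaled integrals over `· ∩ A`, so this is the
defining property of `μ[|A][Y₁ | σ(X)]`.
-/

open MeasureTheory ProbabilityTheory

namespace ProbabilityTheory

section Cond

variable {Ω : Type*} {mΩ : MeasurableSpace Ω} {μ : Measure Ω} {A : Set Ω}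

lemma _root_.MeasureTheory.Integrable.cond {f : Ω → ℝ} (hf : Integrable f μ) :
    Integrable f μ[|A] := by
  rcases eq_or_ne (μ A) 0 with hA | hA
  · simp [cond_eq_zero_of_meas_eq_zero hA]
  · exact hf.restrict.smul_measure (ENNReal.inv_ne_top.mpr hA)

lemma setIntegral_cond {s : Set Ω} (hs : MeasurableSet s) (f : Ω → ℝ) :
    ∫ ω in s, f ω ∂μ[|A] = (μ A)⁻¹.toReal • ∫ ω in s ∩ A, f ω ∂μ := by
  rw [ProbabilityTheory.cond, Measure.restrict_smul, Measure.restrict_restrict hs,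
    integral_smul_measure]

lemma condExp_cond_ae_eq_of_setIntegral_inter_eq {m : MeasurableSpace Ω} (hm : m ≤ mΩ)
    {Y : Ω → ℝ} (hY : Integrable Y μ)
    (h : ∀ s, MeasurableSet[m] s → ∫ ω in s ∩ A, μ[Y|m] ω ∂μ = ∫ ω in s ∩ A, Y ω ∂μ) :
    μ[|A][Y|m] =ᵐ[μ[|A]] μ[Y|m] := by
  refine (ae_eq_condExp_of_forall_setIntegral_eq hm hY.cond
    (fun s _ _ => integrable_condExp.cond.integrableOn) (fun s hs _ => ?_)
    stronglyMeasurable_condExp.aestronglyMeasurable).symm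
  rw [setIntegral_cond (hm s hs), setIntegral_cond (hm s hs), h s hs]

end Cond

section CondIndepFun

variable {Ω β β' : Type*} {m mΩ : MeasurableSpace Ω} [StandardBorelSpace Ω] {hm : m ≤ mΩ}
  {μ : Measure Ω} [IsFiniteMeasure μ]

lemma ae_ae_of_ae_condExpKernel {p : Ω → Prop} (h : ∀ᵐ ω ∂μ, p ω) :
    ∀ᵐ ω ∂μ.trim hm, ∀ᵐ ω' ∂condExpKernel μ m ω, p ω' :=
  Measure.ae_ae_of_ae_comp (by rwa [condExpKernel_comp_trim hm])

lemma CondIndepFun.congr' [MeasurableSpace β] [MeasurableSpace β'] {f f' : Ω → β}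
    {g g' : Ω → β'} (h : CondIndepFun m hm f g μ) (hf : f =ᵐ[μ] f') (hg : g =ᵐ[μ] g') :
    CondIndepFun m hm f' g' μ :=
  Kernel.IndepFun.congr' h (ae_ae_of_ae_condExpKernel hf) (ae_ae_of_ae_condExpKernel hg)

lemma CondIndepFun.ae_indepFun_condExpKernel [MeasurableSpace β] [MeasurableSpace β']
    [MeasurableSpace.CountableOrCountablyGenerated Ω (β × β')] {f : Ω → β} {g : Ω → β'}
    (h : CondIndepFun m hm f g μ) (hf : Measurable f) (hg : Measurable g) :
    ∀ᵐ ω ∂μ.trim hm, IndepFun f g (condExpKernel μ m ω) := by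
  filter_upwards [(condIndepFun_iff_map_prod_eq_prod_map_map hf hg).mp h] with ω hω
  rw [indepFun_iff_map_prod_eq_prod_map_map hf.aemeasurable hg.aemeasurable]
  simpa [Kernel.map_apply _ (hf.prodMk hg), Kernel.prod_apply, Kernel.map_apply _ hf,
    Kernel.map_apply _ hg] using hω

lemma CondIndepFun.condExp_mul_ae_eq {f g : Ω → ℝ} (h : CondIndepFun m hm f g μ)
    (hf : Integrable f μ) (hg : Integrable g μ) (hfg : Integrable (f * g) μ) :
    μ[f * g|m] =ᵐ[μ] μ[f|m] * μ[g|m] := by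
  obtain ⟨f', hf'_meas, hff'⟩ := hf.aestronglyMeasurable
  obtain ⟨g', hg'_meas, hgg'⟩ := hg.aestronglyMeasurable
  have hfg' : f * g =ᵐ[μ] f' * g' := hff'.mul hgg'
  filter_upwards [condExp_congr_ae (m := m) hfg', condExp_congr_ae (m := m) hff',
    condExp_congr_ae (m := m) hgg',
    condExp_ae_eq_integral_condExpKernel hm (hfg.congr hfg'),
    condExp_ae_eq_integral_condExpKernel hm (hf.congr hff'),
    condExp_ae_eq_integral_condExpKernel hm (hg.congr hgg'),
    ae_of_ae_trim hm ((h.congr' hff' hgg').ae_indepFun_condExpKernel hf'_meas.measurable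
      hg'_meas.measurable)] with ω hfg_ω hf_ω hg_ω hfg'_ω hf'_ω hg'_ω hind
  rw [hfg_ω, hfg'_ω, Pi.mul_apply, hf_ω, hf'_ω, hg_ω, hg'_ω]
  exact hind.integral_mul_eq_mul_integral hf'_meas.aestronglyMeasurable
    hg'_meas.aestronglyMeasurable

lemma CondIndepFun.setIntegral_inter_preimage_condExp [MeasurableSpace β] {Y : Ω → ℝ}
    {T : Ω → β} (h : CondIndepFun m hm Y T μ) (hY : Integrable Y μ) (hT : Measurable T)
    {t : Set β} (ht : MeasurableSet t) {s : Set Ω} (hs : MeasurableSet[m] s) :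
    ∫ ω in s ∩ T ⁻¹' t, μ[Y|m] ω ∂μ = ∫ ω in s ∩ T ⁻¹' t, Y ω ∂μ := by
  set A := T ⁻¹' t
  have hA : MeasurableSet A := hT ht
  set I : Ω → ℝ := A.indicator 1
  have hI : Integrable I μ := (integrable_const 1).indicator hA
  have hYI_indep : CondIndepFun m hm Y I μ := h.comp measurable_id (measurable_const.indicator ht)
  have mul_I (F : Ω → ℝ) : F * I = A.indicator F := by
    ext ω; by_cases hω : ω ∈ A <;> simp [I, hω]
  have setIntegral_inter (F : Ω → ℝ) : ∫ ω in s ∩ A, F ω ∂μ = ∫ ω in s, (F * I) ω ∂μ := by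
    rw [mul_I, setIntegral_indicator hA]
  have hYI : Integrable (Y * I) μ := by rw [mul_I]; exact hY.indicator hA
  have hEYI : Integrable (μ[Y|m] * I) μ := by rw [mul_I]; exact integrable_condExp.indicator hA
  calc ∫ ω in s ∩ A, μ[Y|m] ω ∂μ
      = ∫ ω in s, μ[μ[Y|m] * I|m] ω ∂μ := by
        rw [setIntegral_inter, setIntegral_condExp hm hEYI hs]
    _ = ∫ ω in s, (μ[Y|m] * μ[I|m]) ω ∂μ :=
        integral_congr_ae (ae_restrict_of_ae
          (condExp_mul_of_stronglyMeasurable_left stronglyMeasurable_condExp hEYI hI))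
    _ = ∫ ω in s, μ[Y * I|m] ω ∂μ :=
        integral_congr_ae (ae_restrict_of_ae (hYI_indep.condExp_mul_ae_eq hY hI hYI).symm)
    _ = ∫ ω in s ∩ A, Y ω ∂μ := by
        rw [setIntegral_condExp hm hYI hs, setIntegral_inter]

end CondIndepFun

end ProbabilityTheory

theorem condexp_cond_treated_eq_general
    {Ω 𝒳 : Type*} {mΩ : MeasurableSpace Ω} [StandardBorelSpace Ω] [MeasurableSpace 𝒳]
    (μ : Measure Ω) [IsProbabilityMeasure μ]
    (X : Ω → 𝒳) (hX : Measurable X)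
    (T : Ω → ℝ) (hT : Measurable T)
    (Y₁ : Ω → ℝ) (hY₁ : Integrable Y₁ μ)
    (h_unconf : CondIndepFun (MeasurableSpace.comap X inferInstance) hX.comap_le Y₁ T μ) :
    (μ[|{ω | T ω = 1}])[Y₁ | MeasurableSpace.comap X inferInstance]
      =ᵐ[μ[|{ω | T ω = 1}]] μ[Y₁ | MeasurableSpace.comap X inferInstance] :=
  condExp_cond_ae_eq_of_setIntegral_inter_eq hX.comap_le hY₁ fun _ hs =>
    h_unconf.setIntegral_inter_preimage_condExp hY₁ hT (measurableSet_singleton 1) hs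

/-- Under unconfoundedness, regressing the potential outcome `Y₁` on the covariates within
the treated group recovers the population regression function:
`μ₁[Y₁ | σ(X)] = μ[Y₁ | σ(X)]` holds `μ₁`-a.e., where `μ₁ = μ[·|{T = 1}]`. -/
theorem condexp_cond_treated_eq
    {Ω 𝒳 : Type*} {mΩ : MeasurableSpace Ω} [StandardBorelSpace Ω] [MeasurableSpace 𝒳]
    (μ : Measure Ω) [IsProbabilityMeasure μ]
    (X : Ω → 𝒳) (hX : Measurable X)
    (T : Ω → ℝ) (hT : Measurable T)
    (Y₁ : Ω → ℝ) (hY₁ : Integrable Y₁ μ)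
    (h_unconf : CondIndepFun (MeasurableSpace.comap X inferInstance) hX.comap_le Y₁ T μ)
    (hT1 : 0 < μ {ω | T ω = 1}) :
    (μ[|{ω | T ω = 1}])[Y₁ | MeasurableSpace.comap X inferInstance]
      =ᵐ[μ[|{ω | T ω = 1}]] μ[Y₁ | MeasurableSpace.comap X inferInstance] :=
  condexp_cond_treated_eq_general (mΩ := mΩ) μ X hX T hT Y₁ hY₁ h_unconf
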